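/- The complex vector space of homogeneous polynomials of degree 4 in ℂ[x0,x1,x2,x3] that are invariant under the four Heisenberg generator matrices (A1,1), (1,A1), (A2,1), (1,A2) has dimension 5, and the polynomials f0 = x0⁴+x1⁴+x2⁴+x3⁴, f1 = 2(x0²x1²+x2²x3²), f2 = 2(x0²x2²+x1²x3²), f3 = 2(x0²x3²+x1²x2²), f4 = 4x0x1x2x3 form a basis of it. -/

import Mathlib

open Matrix MvPolynomial

noncomputable def A1l : Matrix (Fin 4) (Fin 4) ℝ :=
  !![0, -1, 0, 0; 1, 0, 0, 0; 0, 0, 0, -1; 0, 0, 1, 0]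

noncomputable def A1r : Matrix (Fin 4) (Fin 4) ℝ :=
  !![0, 1, 0, 0; -1, 0, 0, 0; 0, 0, 0, -1; 0, 0, 1, 0]

noncomputable def A2l : Matrix (Fin 4) (Fin 4) ℝ :=
  !![0, 0, -1, 0; 0, 0, 0, 1; 1, 0, 0, 0; 0, -1, 0, 0]

noncomputable def A2r : Matrix (Fin 4) (Fin 4) ℝ :=
  !![0, 0, 1, 0; 0, 0, 0, 1; -1, 0, 0, 0; 0, -1, 0, 0]

/-- The substitution action of a real 4×4 matrix on `ℂ[x₀,x₁,x₂,x₃]`: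
`f(x) ↦ f(M·x)`. -/
noncomputable def subst (M : Matrix (Fin 4) (Fin 4) ℝ) :
    MvPolynomial (Fin 4) ℂ →ₐ[ℂ] MvPolynomial (Fin 4) ℂ :=
  MvPolynomial.aeval (fun i => ∑ j, MvPolynomial.C ((M i j : ℝ) : ℂ) * MvPolynomial.X j)

/-- The space of degree-4 homogeneous polynomials invariant under the four
Heisenberg generators. -/
noncomputable def HeisInv4 : Submodule ℂ (MvPolynomial (Fin 4) ℂ) :=
  homogeneousSubmodule (Fin 4) ℂ 4 ⊓
    ⨅ M ∈ ({A1l, A1r, A2l, A2r} : Set (Matrix (Fin 4) (Fin 4) ℝ)),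
      LinearMap.eqLocus (subst M).toLinearMap LinearMap.id

noncomputable def f0 : MvPolynomial (Fin 4) ℂ := X 0 ^ 4 + X 1 ^ 4 + X 2 ^ 4 + X 3 ^ 4
noncomputable def f1 : MvPolynomial (Fin 4) ℂ := 2 * (X 0 ^ 2 * X 1 ^ 2 + X 2 ^ 2 * X 3 ^ 2)
noncomputable def f2 : MvPolynomial (Fin 4) ℂ := 2 * (X 0 ^ 2 * X 2 ^ 2 + X 1 ^ 2 * X 3 ^ 2)
noncomputable def f3 : MvPolynomial (Fin 4) ℂ := 2 * (X 0 ^ 2 * X 3 ^ 2 + X 1 ^ 2 * X 2 ^ 2)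
noncomputable def f4 : MvPolynomial (Fin 4) ℂ := 4 * (X 0 * X 1 * X 2 * X 3)

/-!
Each generator is a signed permutation matrix, so `f ↦ f(M·x)` sends a monomial to ± a monomial,
and invariance relates the coefficients of `x^(a,b,c,e)` and `x^(b,a,e,c)` (for `(A1,1)`, `(1,A1)`)
or `x^(c,e,a,b)` (for `(A2,1)`, `(1,A2)`) up to sign. The two generators sharing a permutation
give opposite signs when `a + b` (resp. `a + c`) is odd, which kills those coefficients. The
remaining exponents of degree 4 form five orbits under the two permutations, represented by
`x0⁴, x0²x1², x0²x2², x0²x3², x0x1x2x3`, so an invariant is determined by its coefficients there: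
the space has dimension at most 5, and the `fᵢ` are five independent invariants.
-/

namespace MvPolynomial

variable {σ R : Type*} [Fintype σ] [CommSemiring R]

theorem aeval_C_mul_X_perm_monomial (τ : Equiv.Perm σ) (ε : σ → R) (u : σ →₀ ℕ) (a : R) :
    aeval (fun i => C (ε i) * X (τ i)) (monomial u a) =
      monomial (u.equivMapDomain τ) (a * ∏ i, ε i ^ u i) := by
  rw [aeval_monomial, monomial_eq, Finsupp.prod_fintype _ _ (fun _ => pow_zero _),
    Finsupp.prod_fintype _ _ (fun _ => pow_zero _),
    ← Equiv.prod_comp τ (fun j => X j ^ (u.equivMapDomain τ) j)]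
  simp [mul_pow, Finset.prod_mul_distrib, Finsupp.equivMapDomain_apply, mul_assoc]

theorem coeff_equivMapDomain_aeval_C_mul_X_perm (τ : Equiv.Perm σ) (ε : σ → R)
    (p : MvPolynomial σ R) (d : σ →₀ ℕ) :
    coeff (d.equivMapDomain τ) (aeval (fun i => C (ε i) * X (τ i)) p) =
      (∏ i, ε i ^ d i) * coeff d p := by
  classical
  induction p using induction_on' with
  | add p q hp hq => simp only [map_add, coeff_add, hp, hq, mul_add]
  | monomial u a =>
    rw [aeval_C_mul_X_perm_monomial, coeff_monomial, coeff_monomial]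
    by_cases h : u = d
    · simp [h, mul_comm]
    · have h' : u.equivMapDomain τ ≠ d.equivMapDomain τ :=
        (Finsupp.equivCongrLeft τ).injective.ne h
      rw [if_neg h, if_neg h', mul_zero]

end MvPolynomial

lemma eq_zero_of_neg_one_pow_mul_eq_neg_one_pow_mul {R : Type*} [Ring R] [NoZeroDivisors R]
    [CharZero R] {m n : ℕ} (hmn : Odd (m + n)) {x : R} (hx : (-1) ^ m * x = (-1) ^ n * x) :
    x = 0 := by
  rcases Nat.even_or_odd m with hm | hm
  · have hn : Odd n := (Nat.odd_add'.mp hmn).mpr hm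
    exact self_eq_neg.mp (by simpa [hm.neg_one_pow, hn.neg_one_pow] using hx)
  · have hn : Even n := (Nat.odd_add.mp hmn).mp hm
    exact self_eq_neg.mp (by simpa [hm.neg_one_pow, hn.neg_one_pow] using hx.symm)

noncomputable def exponent (a b c e : ℕ) : Fin 4 →₀ ℕ :=
  Finsupp.equivFunOnFinite.symm ![a, b, c, e]

@[simp] lemma exponent_apply_zero (a b c e : ℕ) : exponent a b c e 0 = a := rfl
@[simp] lemma exponent_apply_one (a b c e : ℕ) : exponent a b c e 1 = b := rfl
@[simp] lemma exponent_apply_two (a b c e : ℕ) : exponent a b c e 2 = c := rfl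
@[simp] lemma exponent_apply_three (a b c e : ℕ) : exponent a b c e 3 = e := rfl

lemma exists_eq_exponent (d : Fin 4 →₀ ℕ) : ∃ a b c e, d = exponent a b c e :=
  ⟨d 0, d 1, d 2, d 3, by ext i; fin_cases i <;> rfl⟩

@[simp] lemma exponent_inj {a b c e a' b' c' e' : ℕ} :
    exponent a b c e = exponent a' b' c' e' ↔ a = a' ∧ b = b' ∧ c = c' ∧ e = e' := by
  rw [exponent, exponent, (Finsupp.equivFunOnFinite.symm).injective.eq_iff]
  simp [funext_iff, Fin.forall_fin_succ]

lemma degree_exponent (a b c e : ℕ) : (exponent a b c e).degree = a + b + c + e := by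
  simp [Finsupp.degree_eq_sum, Fin.sum_univ_four, add_assoc]

lemma monomial_exponent (a b c e : ℕ) (r : ℂ) :
    monomial (exponent a b c e) r = C r * X 0 ^ a * X 1 ^ b * X 2 ^ c * X 3 ^ e := by
  rw [monomial_eq, Finsupp.prod_fintype _ _ (fun _ => pow_zero _), Fin.prod_univ_four]
  simp [mul_assoc]

def permA1 : Equiv.Perm (Fin 4) := Equiv.swap 0 1 * Equiv.swap 2 3
def permA2 : Equiv.Perm (Fin 4) := Equiv.swap 0 2 * Equiv.swap 1 3

lemma equivMapDomain_permA1 (a b c e : ℕ) :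
    (exponent a b c e).equivMapDomain permA1 = exponent b a e c := by
  ext i; fin_cases i <;> rfl

lemma equivMapDomain_permA2 (a b c e : ℕ) :
    (exponent a b c e).equivMapDomain permA2 = exponent c e a b := by
  ext i; fin_cases i <;> rfl

lemma subst_A1l : subst A1l = aeval (fun i => C (![-1, 1, -1, 1] i) * X (permA1 i)) := by
  ext i : 1
  fin_cases i <;> simp [subst, A1l, permA1, Fin.sum_univ_four, Equiv.swap_apply_of_ne_of_ne]

lemma subst_A1r : subst A1r = aeval (fun i => C (![1, -1, -1, 1] i) * X (permA1 i)) := by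
  ext i : 1
  fin_cases i <;> simp [subst, A1r, permA1, Fin.sum_univ_four, Equiv.swap_apply_of_ne_of_ne]

lemma subst_A2l : subst A2l = aeval (fun i => C (![-1, 1, 1, -1] i) * X (permA2 i)) := by
  ext i : 1
  fin_cases i <;> simp [subst, A2l, permA2, Fin.sum_univ_four, Equiv.swap_apply_of_ne_of_ne]

lemma subst_A2r : subst A2r = aeval (fun i => C (![1, 1, -1, -1] i) * X (permA2 i)) := by
  ext i : 1
  fin_cases i <;> simp [subst, A2r, permA2, Fin.sum_univ_four, Equiv.swap_apply_of_ne_of_ne]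

lemma coeff_equivMapDomain_of_subst_eq {M : Matrix (Fin 4) (Fin 4) ℝ} {τ : Equiv.Perm (Fin 4)}
    {ε : Fin 4 → ℂ} (hM : subst M = aeval (fun i => C (ε i) * X (τ i)))
    {g : MvPolynomial (Fin 4) ℂ} (hg : subst M g = g) (d : Fin 4 →₀ ℕ) :
    coeff (d.equivMapDomain τ) g = (∏ i, ε i ^ d i) * coeff d g := by
  rw [← coeff_equivMapDomain_aeval_C_mul_X_perm, ← hM, hg]

lemma mem_HeisInv4 {g : MvPolynomial (Fin 4) ℂ} : g ∈ HeisInv4 ↔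
    g.IsHomogeneous 4 ∧ subst A1l g = g ∧ subst A1r g = g ∧ subst A2l g = g ∧ subst A2r g = g := by
  simp [HeisInv4, mem_homogeneousSubmodule]

section Invariant

variable {g : MvPolynomial (Fin 4) ℂ} (hg : g ∈ HeisInv4) (a b c e : ℕ)
include hg

lemma coeff_exponent_A1l :
    coeff (exponent b a e c) g = (-1) ^ (a + c) * coeff (exponent a b c e) g := by
  rw [← equivMapDomain_permA1, coeff_equivMapDomain_of_subst_eq subst_A1l (mem_HeisInv4.1 hg).2.1]
  simp [Fin.prod_univ_four, pow_add]

lemma coeff_exponent_A1r :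
    coeff (exponent b a e c) g = (-1) ^ (b + c) * coeff (exponent a b c e) g := by
  rw [← equivMapDomain_permA1,
    coeff_equivMapDomain_of_subst_eq subst_A1r (mem_HeisInv4.1 hg).2.2.1]
  simp [Fin.prod_univ_four, pow_add]

lemma coeff_exponent_A2l :
    coeff (exponent c e a b) g = (-1) ^ (a + e) * coeff (exponent a b c e) g := by
  rw [← equivMapDomain_permA2,
    coeff_equivMapDomain_of_subst_eq subst_A2l (mem_HeisInv4.1 hg).2.2.2.1]
  simp [Fin.prod_univ_four, pow_add]

lemma coeff_exponent_A2r :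
    coeff (exponent c e a b) g = (-1) ^ (c + e) * coeff (exponent a b c e) g := by
  rw [← equivMapDomain_permA2,
    coeff_equivMapDomain_of_subst_eq subst_A2r (mem_HeisInv4.1 hg).2.2.2.2]
  simp [Fin.prod_univ_four, pow_add]

lemma coeff_exponent_eq_zero_of_odd_add_ab (hab : Odd (a + b)) :
    coeff (exponent a b c e) g = 0 :=
  eq_zero_of_neg_one_pow_mul_eq_neg_one_pow_mul (m := a + c) (n := b + c)
    (by rw [Nat.odd_iff] at hab ⊢; omega)
    ((coeff_exponent_A1l hg a b c e).symm.trans (coeff_exponent_A1r hg a b c e))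

lemma coeff_exponent_eq_zero_of_odd_add_ac (hac : Odd (a + c)) :
    coeff (exponent a b c e) g = 0 :=
  eq_zero_of_neg_one_pow_mul_eq_neg_one_pow_mul (m := a + e) (n := c + e)
    (by rw [Nat.odd_iff] at hac ⊢; omega)
    ((coeff_exponent_A2l hg a b c e).symm.trans (coeff_exponent_A2r hg a b c e))

variable {a b c e}

lemma coeff_exponent_eq_zero_of_permA1 (h : coeff (exponent b a e c) g = 0) :
    coeff (exponent a b c e) g = 0 := by
  simpa [coeff_exponent_A1l hg a b c e] using h

lemma coeff_exponent_eq_zero_of_permA2 (h : coeff (exponent c e a b) g = 0) :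
    coeff (exponent a b c e) g = 0 := by
  simpa [coeff_exponent_A2l hg a b c e] using h

end Invariant

lemma exponent_cases {a b c e : ℕ} (h : a + b + c + e = 4) (hab : Even (a + b))
    (hac : Even (a + c)) :
    (a, b, c, e) ∈ [(4, 0, 0, 0), (0, 4, 0, 0), (0, 0, 4, 0), (0, 0, 0, 4), (2, 2, 0, 0),
      (0, 0, 2, 2), (2, 0, 2, 0), (0, 2, 0, 2), (2, 0, 0, 2), (0, 2, 2, 0), (1, 1, 1, 1)] := by
  rw [Nat.even_iff] at hab hac
  have : a ≤ 4 := by omega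
  have : b ≤ 4 := by omega
  have : c ≤ 4 := by omega
  obtain rfl : e = 4 - a - b - c := by omega
  interval_cases a <;> interval_cases b <;> interval_cases c <;> simp_all

noncomputable def repCoeffs : MvPolynomial (Fin 4) ℂ →ₗ[ℂ] (Fin 5 → ℂ) :=
  LinearMap.pi fun i => lcoeff ℂ (![exponent 4 0 0 0, exponent 2 2 0 0, exponent 2 0 2 0,
    exponent 2 0 0 2, exponent 1 1 1 1] i)

lemma eq_zero_of_mem_HeisInv4_of_repCoeffs_eq_zero {g : MvPolynomial (Fin 4) ℂ}
    (hg : g ∈ HeisInv4) (h : repCoeffs g = 0) : g = 0 := by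
  simp only [repCoeffs, funext_iff, LinearMap.pi_apply, lcoeff_apply, Pi.zero_apply,
    Fin.forall_fin_succ, cons_val_zero, cons_val_succ, cons_val_fin_one, forall_const] at h
  obtain ⟨h0, h1, h2, h3, h4⟩ := h
  ext d
  obtain ⟨a, b, c, e, rfl⟩ := exists_eq_exponent d
  rw [coeff_zero]
  by_cases hdeg : a + b + c + e = 4
  swap
  · exact (mem_HeisInv4.1 hg).1.coeff_eq_zero (by rwa [degree_exponent])
  rcases Nat.even_or_odd (a + b) with hab | hab
  swap
  · exact coeff_exponent_eq_zero_of_odd_add_ab hg a b c e hab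
  rcases Nat.even_or_odd (a + c) with hac | hac
  swap
  · exact coeff_exponent_eq_zero_of_odd_add_ac hg a b c e hac
  have hA1 := @coeff_exponent_eq_zero_of_permA1 g hg
  have hA2 := @coeff_exponent_eq_zero_of_permA2 g hg
  have hcases := exponent_cases hdeg hab hac
  simp only [List.mem_cons, Prod.mk.injEq, List.not_mem_nil, or_false] at hcases
  rcases hcases with
    ⟨rfl, rfl, rfl, rfl⟩ | ⟨rfl, rfl, rfl, rfl⟩ | ⟨rfl, rfl, rfl, rfl⟩ | ⟨rfl, rfl, rfl, rfl⟩ |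
    ⟨rfl, rfl, rfl, rfl⟩ | ⟨rfl, rfl, rfl, rfl⟩ | ⟨rfl, rfl, rfl, rfl⟩ | ⟨rfl, rfl, rfl, rfl⟩ |
    ⟨rfl, rfl, rfl, rfl⟩ | ⟨rfl, rfl, rfl, rfl⟩ | ⟨rfl, rfl, rfl, rfl⟩
  all_goals first
    | assumption | exact hA1 (by assumption) | exact hA2 (by assumption)
    | exact hA1 (hA2 (by assumption))

lemma injective_repCoeffs_domRestrict : Function.Injective (repCoeffs.domRestrict HeisInv4) := by
  rw [← LinearMap.ker_eq_bot, LinearMap.ker_eq_bot']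
  exact fun g hg => Subtype.ext (eq_zero_of_mem_HeisInv4_of_repCoeffs_eq_zero g.2 hg)

instance : FiniteDimensional ℂ HeisInv4 := .of_injective _ injective_repCoeffs_domRestrict

lemma finrank_HeisInv4_le : Module.finrank ℂ HeisInv4 ≤ 5 := by
  simpa using LinearMap.finrank_le_finrank_of_injective injective_repCoeffs_domRestrict

lemma f0_eq : f0 = monomial (exponent 4 0 0 0) 1 + monomial (exponent 0 4 0 0) 1 +
    monomial (exponent 0 0 4 0) 1 + monomial (exponent 0 0 0 4) 1 := by
  simp only [f0, monomial_exponent, map_one]; ring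

lemma f1_eq : f1 = monomial (exponent 2 2 0 0) 2 + monomial (exponent 0 0 2 2) 2 := by
  simp only [f1, monomial_exponent, map_ofNat]; ring

lemma f2_eq : f2 = monomial (exponent 2 0 2 0) 2 + monomial (exponent 0 2 0 2) 2 := by
  simp only [f2, monomial_exponent, map_ofNat]; ring

lemma f3_eq : f3 = monomial (exponent 2 0 0 2) 2 + monomial (exponent 0 2 2 0) 2 := by
  simp only [f3, monomial_exponent, map_ofNat]; ring

lemma f4_eq : f4 = monomial (exponent 1 1 1 1) 4 := by
  simp only [f4, monomial_exponent, map_ofNat]; ring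

lemma isHomogeneous_monomial_exponent {a b c e : ℕ} (r : ℂ) (h : a + b + c + e = 4) :
    (monomial (exponent a b c e) r).IsHomogeneous 4 :=
  isHomogeneous_monomial r ((degree_exponent a b c e).trans h)

lemma isHomogeneous_f (i : Fin 5) : (![f0, f1, f2, f3, f4] i).IsHomogeneous 4 := by
  fin_cases i <;> simp only [f0_eq, f1_eq, f2_eq, f3_eq, f4_eq] <;>
    repeat' first | refine IsHomogeneous.add ?_ ?_ | exact isHomogeneous_monomial_exponent _ rfl

lemma f_mem_HeisInv4 (i : Fin 5) : ![f0, f1, f2, f3, f4] i ∈ HeisInv4 := by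
  refine mem_HeisInv4.2 ⟨isHomogeneous_f i, ?_⟩
  refine ⟨?_, ?_, ?_, ?_⟩ <;> fin_cases i <;>
    simp [f0, f1, f2, f3, f4, subst_A1l, subst_A1r, subst_A2l, subst_A2r, permA1, permA2,
      Equiv.swap_apply_of_ne_of_ne, map_ofNat] <;> ring

lemma repCoeffs_f (i : Fin 5) :
    repCoeffs (![f0, f1, f2, f3, f4] i) = Pi.single i (![1, 2, 2, 2, 4] i) := by
  fin_cases i <;> ext j <;> fin_cases j <;>
    simp [repCoeffs, f0_eq, f1_eq, f2_eq, f3_eq, f4_eq, coeff_monomial]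

lemma linearIndependent_f : LinearIndependent ℂ ![f0, f1, f2, f3, f4] := by
  refine LinearIndependent.of_comp repCoeffs ?_
  rw [show repCoeffs ∘ ![f0, f1, f2, f3, f4] = _ from funext repCoeffs_f]
  exact Pi.linearIndependent_single_of_ne_zero fun i => by fin_cases i <;> norm_num

theorem stmt3 :
    Module.finrank ℂ HeisInv4 = 5 ∧
    (∀ i : Fin 5, (![f0, f1, f2, f3, f4] i) ∈ HeisInv4) ∧
    LinearIndependent ℂ ![f0, f1, f2, f3, f4] ∧
    HeisInv4 ≤ Submodule.span ℂ (Set.range ![f0, f1, f2, f3, f4]) := by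
  have hspan : Submodule.span ℂ (Set.range ![f0, f1, f2, f3, f4]) = HeisInv4 :=
    Submodule.eq_of_le_of_finrank_le
      (Submodule.span_le.2 (Set.range_subset_iff.2 f_mem_HeisInv4))
      (by simpa [finrank_span_eq_card linearIndependent_f] using finrank_HeisInv4_le)
  refine ⟨?_, f_mem_HeisInv4, linearIndependent_f, hspan.ge⟩
  rw [← hspan, finrank_span_eq_card linearIndependent_f, Fintype.card_fin]
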